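/- arXiv:1305.6601 — 2 statements merged into one kernel-verified Lean document; each statement's English description precedes it below -/
import Mathlib

section
/- Let f : I ⊆ (0,∞) → (0,∞) be differentiable on I°, let a, b ∈ I° with a < b, f' integrable on [a,b], and suppose |f'|^q is s-geometrically convex on [a,b] for some q ≥ 1 and s ∈ (0,1]. If |f'(a)| ≤ 1 ≤ |f'(b)|, then |(f(a)+f(b))/2 − (1/(ln b − ln a)) ∫_a^b f(x)/x dx| ≤ ln(b/a) · (1/2)^{2−1/q} · [ a|f'(a)|^s |f'(b)|^{1−s} g₁(θ₁)^{1/q} + b|f'(b)| g₁(θ₂)^{1/q} ]. -/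
open Real MeasureTheory Set

/-- `g` is `s`-geometrically convex on `J`. -/
def SGeometricallyConvexOn (s : ℝ) (J : Set ℝ) (g : ℝ → ℝ) : Prop :=
  ∀ x ∈ J, ∀ y ∈ J, ∀ t ∈ Set.Icc (0:ℝ) 1,
    g (x ^ t * y ^ (1 - t)) ≤ g x ^ t ^ s * g y ^ (1 - t) ^ s

noncomputable def g₁ (u : ℝ) : ℝ :=
  if u = 1 then 1/2 else (u * Real.log u - u + 1) / (Real.log u) ^ 2

noncomputable def g₂ (u : ℝ) : ℝ :=
  if u = 1 then 1 else (u - 1) / Real.log u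

/-!
Integrating by parts against `log x - (log a + log b) / 2` turns the left-hand side into
`L⁻¹ |∫_a^b (log x - (log a + log b) / 2) f'(x) dx|` with `L = log b - log a`, and the substitution
`x = a^t b^(1-t)` bounds it by `L ∫_0^1 |1/2 - t| x |f'(x)| dt`. Geometric convexity, combined with
`|f'(a)| ≤ 1 ≤ |f'(b)|`, `s t ≤ t^s` and Bernoulli's `(1 - t)^s ≤ 1 - s t`, bounds `x |f'(x)|` by
`|f'(b)|^(1-s) (a |f'(a)|^s)^t (b |f'(b)|^s)^(1-t)`. Splitting `|1/2 - t| ≤ ((1 - t) + t) / 2` and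
applying Hölder's inequality to the weights `1 - t` and `t` gives the two terms, because
`∫_0^1 t u^t dt = g₁ u`.
-/

theorem integral_mul_rpow_eq_g₁ {u : ℝ} (hu : 0 < u) : ∫ t in (0:ℝ)..1, t * u ^ t = g₁ u := by
  rcases eq_or_ne u 1 with rfl | hu1
  · simp [g₁, integral_id]
  have hlog : log u ≠ 0 := log_ne_zero_of_pos_of_ne_one hu hu1
  have hprim (t : ℝ) :
      HasDerivAt (fun t ↦ t * u ^ t / log u - u ^ t / log u ^ 2) (t * u ^ t) t := by
    have hpow := (hasStrictDerivAt_const_rpow hu t).hasDerivAt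
    refine ((((hasDerivAt_id' t).mul hpow).div_const (log u)).sub
      (hpow.div_const (log u ^ 2))).congr_deriv ?_
    field_simp
    ring
  have hcont : Continuous fun t : ℝ ↦ t * u ^ t := by fun_prop (disch := positivity)
  rw [intervalIntegral.integral_eq_sub_of_hasDerivAt (fun t _ ↦ hprim t)
    (hcont.intervalIntegrable 0 1)]
  simp only [g₁, if_neg hu1, rpow_one, rpow_zero]
  field_simp
  ring

theorem g₁_nonneg {u : ℝ} (hu : 0 ≤ u) : 0 ≤ g₁ u := by
  rcases hu.eq_or_lt with rfl | hu
  · simp [g₁]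
  rw [← integral_mul_rpow_eq_g₁ hu]
  exact intervalIntegral.integral_nonneg zero_le_one fun t ht ↦ by have := ht.1; positivity

theorem integral_mul_geomMean_eq {u v : ℝ} (hu : 0 < u) (hv : 0 < v) :
    ∫ t in (0:ℝ)..1, t * (u ^ t * v ^ (1 - t)) = v * g₁ (u / v) := by
  have h (t : ℝ) : t * (u ^ t * v ^ (1 - t)) = v * (t * (u / v) ^ t) := by
    rw [div_rpow hu.le hv.le, rpow_sub hv, rpow_one]
    field_simp
  simp only [h, intervalIntegral.integral_const_mul, integral_mul_rpow_eq_g₁ (div_pos hu hv)]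

theorem integral_one_sub_mul_geomMean_eq_integral_mul_geomMean (u v : ℝ) :
    ∫ t in (0:ℝ)..1, (1 - t) * (u ^ t * v ^ (1 - t)) =
      ∫ t in (0:ℝ)..1, t * (v ^ t * u ^ (1 - t)) := by
  have := intervalIntegral.integral_comp_sub_left (a := 0) (b := 1)
    (fun t ↦ t * (v ^ t * u ^ (1 - t))) 1
  simp only [sub_sub_cancel, sub_zero, sub_self] at this
  rw [← this]
  congr 1 with t
  ring

theorem memLp_restrict_Ioc_of_continuousOn {a b : ℝ} {g : ℝ → ℝ} (hg : ContinuousOn g (Icc a b))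
    (p : ENNReal) : MemLp g p (volume.restrict (Ioc a b)) := by
  obtain ⟨C, hC⟩ := isCompact_Icc.exists_bound_of_continuousOn hg
  exact .of_bound ((hg.mono Ioc_subset_Icc_self).aestronglyMeasurable measurableSet_Ioc) C
    ((ae_restrict_iff' measurableSet_Ioc).2 (ae_of_all _ fun t ht ↦ hC t (Ioc_subset_Icc_self ht)))

theorem integral_mul_le_integral_mul_rpow {q a b : ℝ} (hq : 1 ≤ q) (hab : a ≤ b) {w h : ℝ → ℝ}
    (hw : ContinuousOn w (Icc a b)) (hh : ContinuousOn h (Icc a b))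
    (hw0 : ∀ t ∈ Icc a b, 0 ≤ w t) (hh0 : ∀ t ∈ Icc a b, 0 ≤ h t) :
    ∫ t in a..b, w t * h t ≤
      (∫ t in a..b, w t) ^ (1 - 1 / q) * (∫ t in a..b, w t * h t ^ q) ^ (1 / q) := by
  rcases hq.eq_or_lt with rfl | hq
  · simp
  set p := q.conjExponent
  have hpq : p.HolderConjugate q := (HolderConjugate.conjExponent hq).symm
  have hp : 1 / p = 1 - 1 / q := by rw [eq_sub_iff_add_eq, one_div, one_div, hpq.inv_add_inv_eq_one]
  have hp0 : 0 ≤ 1 / p := by rw [hp]; linarith [one_div_le_one_div_of_le one_pos hq.le]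
  have hq0 : 0 < q := one_pos.trans hq
  have hIoc : ∀ᵐ t ∂volume.restrict (Ioc a b), t ∈ Icc a b :=
    (ae_restrict_iff' measurableSet_Ioc).2 (ae_of_all _ fun _ ht ↦ Ioc_subset_Icc_self ht)
  have hholder := integral_mul_le_Lp_mul_Lq_of_nonneg hpq
    (f := fun t ↦ w t ^ (1 / p)) (g := fun t ↦ w t ^ (1 / q) * h t)
    (hIoc.mono fun t ht ↦ rpow_nonneg (hw0 t ht) _)
    (hIoc.mono fun t ht ↦ mul_nonneg (rpow_nonneg (hw0 t ht) _) (hh0 t ht))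
    (memLp_restrict_Ioc_of_continuousOn (hw.rpow_const fun _ _ ↦ Or.inr hp0) _)
    (memLp_restrict_Ioc_of_continuousOn
      ((hw.rpow_const fun _ _ ↦ Or.inr (by positivity)).mul hh) _)
  have hw0' (t : ℝ) (ht : t ∈ Ioc a b) : 0 ≤ w t := hw0 t (Ioc_subset_Icc_self ht)
  have hfg : EqOn (fun t ↦ w t ^ (1 / p) * (w t ^ (1 / q) * h t)) (fun t ↦ w t * h t) (Ioc a b) :=
    fun t ht ↦ by
      dsimp only
      rw [← mul_assoc, ← rpow_add' (hw0' t ht) (by rw [hp]; simp), hp, sub_add_cancel, rpow_one]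
  have hf : EqOn (fun t ↦ (w t ^ (1 / p)) ^ p) w (Ioc a b) := fun t ht ↦ by
    dsimp only
    rw [← rpow_mul (hw0' t ht), one_div_mul_cancel hpq.pos.ne', rpow_one]
  have hg : EqOn (fun t ↦ (w t ^ (1 / q) * h t) ^ q) (fun t ↦ w t * h t ^ q) (Ioc a b) :=
    fun t ht ↦ by
      dsimp only
      rw [mul_rpow (rpow_nonneg (hw0' t ht) _) (hh0 t (Ioc_subset_Icc_self ht)),
        ← rpow_mul (hw0' t ht), one_div_mul_cancel hq0.ne', rpow_one]
  simp only [intervalIntegral.integral_of_le hab]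
  rwa [setIntegral_congr_fun measurableSet_Ioc hfg, setIntegral_congr_fun measurableSet_Ioc hf,
    setIntegral_congr_fun measurableSet_Ioc hg, hp] at hholder

theorem integral_mul_geomMean_le {q u v : ℝ} (hq : 1 ≤ q) (hu : 0 < u) (hv : 0 < v) :
    ∫ t in (0:ℝ)..1, t * (u ^ t * v ^ (1 - t)) ≤
      (1 / 2) ^ (1 - 1 / q) * (v * g₁ ((u / v) ^ q) ^ (1 / q)) := by
  have hq0 : 0 < q := one_pos.trans_le hq
  have hpow (t : ℝ) : (u ^ t * v ^ (1 - t)) ^ q = (u ^ q) ^ t * (v ^ q) ^ (1 - t) := by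
    rw [mul_rpow (by positivity) (by positivity), ← rpow_mul hu.le, ← rpow_mul hv.le,
      ← rpow_mul hu.le, ← rpow_mul hv.le, mul_comm t, mul_comm (1 - t)]
  calc ∫ t in (0:ℝ)..1, t * (u ^ t * v ^ (1 - t))
      ≤ (∫ t in (0:ℝ)..1, t) ^ (1 - 1 / q) *
          (∫ t in (0:ℝ)..1, t * (u ^ t * v ^ (1 - t)) ^ q) ^ (1 / q) :=
        integral_mul_le_integral_mul_rpow hq zero_le_one continuousOn_id
          (by fun_prop (disch := positivity)) (fun t ht ↦ ht.1) fun t _ ↦ by positivity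
    _ = (1 / 2) ^ (1 - 1 / q) * (v ^ q * g₁ ((u / v) ^ q)) ^ (1 / q) := by
        simp only [hpow, integral_id, integral_mul_geomMean_eq (rpow_pos_of_pos hu q)
          (rpow_pos_of_pos hv q), div_rpow hu.le hv.le]
        norm_num
    _ = (1 / 2) ^ (1 - 1 / q) * (v * g₁ ((u / v) ^ q) ^ (1 / q)) := by
        rw [mul_rpow (by positivity) (g₁_nonneg (by positivity)), ← rpow_mul hv.le,
          mul_one_div_cancel hq0.ne', rpow_one]

theorem integral_abs_half_sub_mul_le {q u v c : ℝ} (hq : 1 ≤ q) (hu : 0 ≤ u) (hv : 0 < v)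
    (hc : 0 ≤ c) {X : ℝ → ℝ} (hX0 : ∀ t ∈ Icc (0:ℝ) 1, 0 ≤ X t)
    (hX : ∀ t ∈ Icc (0:ℝ) 1, X t ≤ c * (u ^ t * v ^ (1 - t))) :
    ∫ t in (0:ℝ)..1, |1 / 2 - t| * X t ≤
      (1 / 2) ^ (2 - 1 / q) * c *
        (u * g₁ ((v / u) ^ q) ^ (1 / q) + v * g₁ ((u / v) ^ q) ^ (1 / q)) := by
  have hg₁θ₁ := g₁_nonneg (rpow_nonneg (div_nonneg hv.le hu) q)
  have hg₁θ₂ := g₁_nonneg (rpow_nonneg (div_nonneg hu hv.le) q)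
  have hIoc : ∀ᵐ t ∂volume.restrict (Ioc (0:ℝ) 1), t ∈ Ioc (0:ℝ) 1 :=
    ae_restrict_mem measurableSet_Ioc
  rw [intervalIntegral.integral_of_le zero_le_one]
  rcases hu.eq_or_lt with rfl | hu
  · -- for `u = 0` the bound on `X` vanishes on `(0, 1]`
    refine (integral_nonpos_of_ae (hIoc.mono fun t ht ↦ ?_)).trans (by positivity)
    have := hX t (Ioc_subset_Icc_self ht)
    rw [zero_rpow ht.1.ne', zero_mul, mul_zero] at this
    exact mul_nonpos_of_nonneg_of_nonpos (abs_nonneg _) this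
  set G : ℝ → ℝ := fun t ↦ u ^ t * v ^ (1 - t)
  have hG : Continuous G := by fun_prop (disch := positivity)
  calc ∫ t in Ioc (0:ℝ) 1, |1 / 2 - t| * X t
      ≤ ∫ t in Ioc (0:ℝ) 1, 1 / 2 * c * ((1 - t) * G t + t * G t) := by
        refine integral_mono_of_nonneg (hIoc.mono fun t ht ↦ ?_) ?_ (hIoc.mono fun t ht ↦ ?_)
        · exact mul_nonneg (abs_nonneg _) (hX0 t (Ioc_subset_Icc_self ht))
        · exact (Continuous.integrableOn_Icc (by fun_prop)).mono_set Ioc_subset_Icc_self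
        · have hXt := hX t (Ioc_subset_Icc_self ht)
          have : |1 / 2 - t| ≤ 1 / 2 := abs_le.2 ⟨by linarith [ht.2], by linarith [ht.1]⟩
          calc |1 / 2 - t| * X t ≤ 1 / 2 * (c * G t) :=
                mul_le_mul this hXt (hX0 t (Ioc_subset_Icc_self ht)) (by norm_num)
            _ = 1 / 2 * c * ((1 - t) * G t + t * G t) := by ring
    _ = 1 / 2 * c * ((∫ t in (0:ℝ)..1, (1 - t) * G t) + ∫ t in (0:ℝ)..1, t * G t) := by
        rw [integral_const_mul, ← intervalIntegral.integral_of_le zero_le_one,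
          intervalIntegral.integral_add ((by fun_prop : Continuous _).intervalIntegrable _ _)
            ((by fun_prop : Continuous _).intervalIntegrable _ _)]
    _ ≤ 1 / 2 * c * ((1 / 2) ^ (1 - 1 / q) * (u * g₁ ((v / u) ^ q) ^ (1 / q)) +
          (1 / 2) ^ (1 - 1 / q) * (v * g₁ ((u / v) ^ q) ^ (1 / q))) := by
        gcongr
        · rw [integral_one_sub_mul_geomMean_eq_integral_mul_geomMean]
          exact integral_mul_geomMean_le hq hv hu
        · exact integral_mul_geomMean_le hq hu hv
    _ = _ := by
        rw [show (2:ℝ) - 1 / q = 1 + (1 - 1 / q) by ring, rpow_add (by norm_num), rpow_one]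
        ring

theorem rpow_pow_mul_rpow_one_sub_pow_le {x y s t : ℝ} (hx0 : 0 ≤ x) (hx1 : x ≤ 1) (hy : 1 ≤ y)
    (hs : s ∈ Ioc (0:ℝ) 1) (ht : t ∈ Icc (0:ℝ) 1) :
    x ^ t ^ s * y ^ (1 - t) ^ s ≤ x ^ (s * t) * y ^ (1 - s * t) := by
  have hst : s * t ≤ t ^ s :=
    (mul_le_of_le_one_left ht.1 hs.2).trans (self_le_rpow_of_le_one ht.1 ht.2 hs.2)
  have hbernoulli : (1 - t) ^ s ≤ 1 - s * t := by
    simpa [sub_eq_add_neg] using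
      rpow_one_add_le_one_add_mul_self (by linarith [ht.2] : -1 ≤ -t) hs.1.le hs.2
  exact mul_le_mul (rpow_le_rpow_of_exponent_ge' hx0 hx1 (by nlinarith [hs.1, ht.1]) hst)
    (rpow_le_rpow_of_exponent_le hy hbernoulli) (by positivity) (by positivity)

theorem SGeometricallyConvexOn.le_rpow_mul_rpow {s : ℝ} {J : Set ℝ} {g : ℝ → ℝ}
    (hg : SGeometricallyConvexOn s J g) (hs : s ∈ Ioc (0:ℝ) 1) {x y t : ℝ} (hx : x ∈ J)
    (hy : y ∈ J) (hgx0 : 0 ≤ g x) (hgx1 : g x ≤ 1) (hgy : 1 ≤ g y) (ht : t ∈ Icc (0:ℝ) 1) :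
    g (x ^ t * y ^ (1 - t)) ≤ g x ^ (s * t) * g y ^ (1 - s * t) :=
  (hg x hx y hy t ht).trans (rpow_pow_mul_rpow_one_sub_pow_le hgx0 hgx1 hgy hs ht)

theorem geomMean_mul_abs_le_of_sGeometricallyConvexOn {f' : ℝ → ℝ} {a b q s t : ℝ}
    (ha : 0 < a) (hab : a ≤ b) (hq : 0 < q) (hs : s ∈ Ioc (0:ℝ) 1)
    (hconv : SGeometricallyConvexOn s (Icc a b) (fun x ↦ |f' x| ^ q))
    (hfa : |f' a| ≤ 1) (hfb : 1 ≤ |f' b|) (ht : t ∈ Icc (0:ℝ) 1) :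
    a ^ t * b ^ (1 - t) * |f' (a ^ t * b ^ (1 - t))| ≤
      |f' b| ^ (1 - s) * ((a * |f' a| ^ s) ^ t * (b * |f' b| ^ s) ^ (1 - t)) := by
  have hb : 0 < b := ha.trans_le hab
  have hM : 0 < |f' b| := one_pos.trans_le hfb
  have hpow := hconv.le_rpow_mul_rpow hs ⟨le_rfl, hab⟩ ⟨hab, le_rfl⟩ (by positivity)
    (rpow_le_one (abs_nonneg _) hfa hq.le) (one_le_rpow hfb hq.le) ht
  have habs : |f' (a ^ t * b ^ (1 - t))| ≤ |f' a| ^ (s * t) * |f' b| ^ (1 - s * t) := by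
    rw [← rpow_le_rpow_iff (abs_nonneg _) (by positivity) hq, mul_rpow (by positivity)
      (by positivity), ← rpow_mul (abs_nonneg _), ← rpow_mul (abs_nonneg _), mul_comm (s * t),
      mul_comm (1 - s * t), rpow_mul (abs_nonneg _), rpow_mul (abs_nonneg _)]
    exact hpow
  calc a ^ t * b ^ (1 - t) * |f' (a ^ t * b ^ (1 - t))|
      ≤ a ^ t * b ^ (1 - t) * (|f' a| ^ (s * t) * |f' b| ^ (1 - s * t)) := by gcongr
    _ = |f' b| ^ (1 - s) * ((a * |f' a| ^ s) ^ t * (b * |f' b| ^ s) ^ (1 - t)) := by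
      rw [mul_rpow ha.le (by positivity), mul_rpow hb.le (by positivity),
        ← rpow_mul (abs_nonneg _), ← rpow_mul (abs_nonneg _),
        show 1 - s * t = 1 - s + s * (1 - t) by ring, rpow_add hM]
      ring

theorem integral_log_sub_mul_deriv_eq {f f' : ℝ → ℝ} {a b : ℝ} (ha : 0 < a) (hb : 0 < b)
    (hf : ∀ x ∈ uIcc a b, HasDerivAt f (f' x) x) (hf' : IntervalIntegrable f' volume a b) :
    ∫ x in a..b, (log x - (log a + log b) / 2) * f' x =
      (log b - log a) * ((f a + f b) / 2) - ∫ x in a..b, f x / x := by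
  have hpos (x : ℝ) (hx : x ∈ uIcc a b) : 0 < x := (lt_min ha hb).trans_le hx.1
  have hlog (x : ℝ) (hx : x ∈ uIcc a b) :
      HasDerivAt (fun x ↦ log x - (log a + log b) / 2) x⁻¹ x :=
    (hasDerivAt_log (hpos x hx).ne').sub_const _
  have hinv : IntervalIntegrable (fun x : ℝ ↦ x⁻¹) volume a b :=
    intervalIntegral.intervalIntegrable_inv (fun x hx ↦ (hpos x hx).ne') continuousOn_id
  rw [intervalIntegral.integral_mul_deriv_eq_deriv_mul hlog hf hinv hf']
  simp only [inv_mul_eq_div]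
  ring

theorem integral_eq_log_sub_mul_integral_geomMean {a b : ℝ} (ha : 0 < a) (hab : a < b)
    (g : ℝ → ℝ) :
    ∫ x in a..b, g x =
      (log b - log a) * ∫ t in (0:ℝ)..1, a ^ t * b ^ (1 - t) * g (a ^ t * b ^ (1 - t)) := by
  have hb : 0 < b := ha.trans hab
  set A : ℝ → ℝ := fun t ↦ a ^ t * b ^ (1 - t) with hA
  have hA_pos (t : ℝ) : 0 < A t := by positivity
  have hlogA (t : ℝ) : log (A t) = log b - t * (log b - log a) := by
    rw [hA, log_mul (by positivity) (by positivity), log_rpow ha, log_rpow hb]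
    ring
  have hderiv (t : ℝ) : HasDerivAt A (A t * (log a - log b)) t := by
    have hb' := (hasStrictDerivAt_const_rpow hb (1 - t)).hasDerivAt.comp t
      ((hasDerivAt_id' t).const_sub 1)
    refine ((hasStrictDerivAt_const_rpow ha t).hasDerivAt.mul hb').congr_deriv ?_
    simp only [hA, Function.comp_apply]
    ring
  have hinj : InjOn A (Icc 0 1) := fun t _ t' _ h ↦ by
    have := congrArg log h
    rw [hlogA, hlogA] at this
    nlinarith [log_lt_log ha hab]
  have himage : A '' Icc 0 1 = Icc a b := by
    refine (image_subset_iff.2 fun t ht ↦ ?_).antisymm ?_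
    · rw [mem_preimage, mem_Icc, ← log_le_log_iff ha (hA_pos t), ← log_le_log_iff (hA_pos t) hb,
        hlogA]
      constructor <;> nlinarith [log_lt_log ha hab, ht.1, ht.2]
    · simpa [hA] using intermediate_value_Icc' zero_le_one
        (fun t _ ↦ (hderiv t).continuousAt.continuousWithinAt)
  rw [intervalIntegral.integral_of_le hab.le, intervalIntegral.integral_of_le zero_le_one,
    ← integral_Icc_eq_integral_Ioc, ← integral_Icc_eq_integral_Ioc, ← himage,
    integral_image_eq_integral_abs_deriv_smul measurableSet_Icc
      (fun t _ ↦ (hderiv t).hasDerivWithinAt) hinj, ← integral_const_mul]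
  refine setIntegral_congr_fun measurableSet_Icc fun t _ ↦ ?_
  rw [smul_eq_mul, abs_mul, abs_of_pos (hA_pos t), abs_of_neg (by linarith [log_lt_log ha hab])]
  ring

theorem integral_abs_log_sub_mul_eq {a b : ℝ} (ha : 0 < a) (hab : a < b) (φ : ℝ → ℝ) :
    ∫ x in a..b, |log x - (log a + log b) / 2| * φ x =
      (log b - log a) ^ 2 *
        ∫ t in (0:ℝ)..1, |1 / 2 - t| * (a ^ t * b ^ (1 - t) * φ (a ^ t * b ^ (1 - t))) := by
  have hb : 0 < b := ha.trans hab
  have hL : 0 < log b - log a := sub_pos.2 (log_lt_log ha hab)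
  have hlog (t : ℝ) : |log (a ^ t * b ^ (1 - t)) - (log a + log b) / 2| =
      (log b - log a) * |1 / 2 - t| := by
    rw [log_mul (by positivity) (by positivity), log_rpow ha, log_rpow hb,
      show t * log a + (1 - t) * log b - (log a + log b) / 2 = (log b - log a) * (1 / 2 - t) by
        ring, abs_mul, abs_of_pos hL]
  rw [integral_eq_log_sub_mul_integral_geomMean ha hab, sq, mul_assoc,
    ← intervalIntegral.integral_const_mul, ← intervalIntegral.integral_const_mul,
    ← intervalIntegral.integral_const_mul]
  simp only [hlog]
  congr 1 with t
  ring

theorem stmt_4_general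
    (I : Set ℝ) (hI : I.OrdConnected) (hIpos : I ⊆ Set.Ioi (0:ℝ))
    (f f' : ℝ → ℝ)
    (a b : ℝ) (ha : a ∈ interior I) (hb : b ∈ interior I) (hab : a < b)
    (hdiff : ∀ x ∈ interior I, HasDerivAt f (f' x) x)
    (hint : IntervalIntegrable f' volume a b)
    (q s : ℝ) (hq : 1 ≤ q) (hs : s ∈ Set.Ioc (0:ℝ) 1)
    (hconv : SGeometricallyConvexOn s (Set.Icc a b) (fun x => |f' x| ^ q))
    (hfa : |f' a| ≤ 1) (hfb : 1 ≤ |f' b|) :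
    |(f a + f b) / 2 - (1 / (Real.log b - Real.log a)) * ∫ x in a..b, f x / x| ≤
      Real.log (b / a) * (1 / 2 : ℝ) ^ (2 - 1 / q) *
        (a * |f' a| ^ s * |f' b| ^ (1 - s) * (g₁ ((b * |f' b| ^ s / (a * |f' a| ^ s)) ^ (q))) ^ (1 / q)
         + b * |f' b| * (g₁ ((a * |f' a| ^ s / (b * |f' b| ^ s)) ^ (q))) ^ (1 / q)) := by
  have ha0 : 0 < a := hIpos (interior_subset ha)
  have hb0 : 0 < b := ha0.trans hab
  have hL : 0 < log b - log a := sub_pos.2 (log_lt_log ha0 hab)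
  have hM : 0 < |f' b| := one_pos.trans_le hfb
  have hderiv (x : ℝ) (hx : x ∈ uIcc a b) : HasDerivAt f (f' x) x :=
    hdiff x (hI.interior.out ha hb (by rwa [uIcc_of_le hab.le] at hx))
  have hrep : (f a + f b) / 2 - 1 / (log b - log a) * ∫ x in a..b, f x / x =
      (∫ x in a..b, (log x - (log a + log b) / 2) * f' x) / (log b - log a) := by
    rw [integral_log_sub_mul_deriv_eq ha0 hb0 hderiv hint]
    field_simp
  rw [hrep, abs_div, abs_of_pos hL, div_le_iff₀ hL, log_div hb0.ne' ha0.ne']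
  calc |∫ x in a..b, (log x - (log a + log b) / 2) * f' x|
      ≤ ∫ x in a..b, |log x - (log a + log b) / 2| * |f' x| := by
        simpa only [abs_mul] using intervalIntegral.abs_integral_le_integral_abs (μ := volume)
          (f := fun x ↦ (log x - (log a + log b) / 2) * f' x) hab.le
    _ = (log b - log a) ^ 2 *
          ∫ t in (0:ℝ)..1, |1 / 2 - t| * (a ^ t * b ^ (1 - t) * |f' (a ^ t * b ^ (1 - t))|) :=
        integral_abs_log_sub_mul_eq ha0 hab _
    _ ≤ (log b - log a) ^ 2 * ((1 / 2) ^ (2 - 1 / q) * |f' b| ^ (1 - s) *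
          (a * |f' a| ^ s * g₁ ((b * |f' b| ^ s / (a * |f' a| ^ s)) ^ q) ^ (1 / q) +
            b * |f' b| ^ s * g₁ ((a * |f' a| ^ s / (b * |f' b| ^ s)) ^ q) ^ (1 / q))) := by
        gcongr
        exact integral_abs_half_sub_mul_le hq (by positivity) (by positivity) (by positivity)
          (fun t _ ↦ by positivity)
          (fun t ht ↦ geomMean_mul_abs_le_of_sGeometricallyConvexOn ha0 hab.le
            (one_pos.trans_le hq) hs hconv hfa hfb ht)
    _ = _ := by
        rw [show b * |f' b| = |f' b| ^ (1 - s) * (b * |f' b| ^ s) by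
          rw [mul_left_comm, ← rpow_add hM, sub_add_cancel, rpow_one]]
        ring

theorem stmt_4
    (I : Set ℝ) (hI : I.OrdConnected) (hIpos : I ⊆ Set.Ioi (0:ℝ))
    (f f' : ℝ → ℝ) (hfpos : ∀ x ∈ I, 0 < f x)
    (a b : ℝ) (ha : a ∈ interior I) (hb : b ∈ interior I) (hab : a < b)
    (hdiff : ∀ x ∈ interior I, HasDerivAt f (f' x) x)
    (hint : IntervalIntegrable f' volume a b)
    (q s : ℝ) (hq : 1 ≤ q) (hs : s ∈ Set.Ioc (0:ℝ) 1)
    (hconv : SGeometricallyConvexOn s (Set.Icc a b) (fun x => |f' x| ^ q))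
    (hfa : |f' a| ≤ 1) (hfb : 1 ≤ |f' b|) :
    |(f a + f b) / 2 - (1 / (Real.log b - Real.log a)) * ∫ x in a..b, f x / x| ≤
      Real.log (b / a) * (1 / 2 : ℝ) ^ (2 - 1 / q) *
        (a * |f' a| ^ s * |f' b| ^ (1 - s) * (g₁ ((b * |f' b| ^ s / (a * |f' a| ^ s)) ^ (q))) ^ (1 / q)
         + b * |f' b| * (g₁ ((a * |f' a| ^ s / (b * |f' b| ^ s)) ^ (q))) ^ (1 / q)) :=
  stmt_4_general I hI hIpos f f' a b ha hb hab hdiff hint q s hq hs hconv hfa hfb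
end

section
/- Let f : I ⊆ (0,∞) → (0,∞) be differentiable on I°, let a, b ∈ I° with a < b, f' integrable on [a,b], and suppose |f'|^q is s-geometrically convex on [a,b] for some q ≥ 1 and s ∈ (0,1]. If |f'(a)| ≤ 1 and |f'(b)| ≤ 1, then |f(√(ab)) − (1/(ln b − ln a)) ∫_a^b f(x)/x dx| ≤ ln(b/a) · (1/2)^{3−1/q} · [ a|f'(a)|^s g₁(θ₃)^{1/q} + b|f'(b)|^s g₁(θ₄)^{1/q} ]. -/
open Real MeasureTheory Set

/-!
Substituting `x = a ^ (1 - t) * b ^ t` turns `(1 / log (b / a)) * ∫ x in a..b, f x / x` into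
`∫ t in 0..1, F t` for `F t = f (a ^ (1 - t) * b ^ t)`, and `f √(a * b)` into `F (1 / 2)`.
Integrating `F'` by parts against the kernel `t` on `[0, 1/2]` and `t - 1` on `[1/2, 1]` bounds the
difference by `∫ t in 0..1/2, t * (|F' t| + |F' (1 - t)|)`. Because `|f' a|, |f' b| ≤ 1`,
`s`-geometric convexity of `|f'| ^ q` gives the log-linear bound
`|F' t| ≤ (l * a * |f' a| ^ s) ^ (1 - t) * (l * b * |f' b| ^ s) ^ t` with `l = log (b / a)`.
The power-mean inequality for the weight `t` on `[0, 1/2]` and the closed form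
`∫ t in 0..1/2, t * v ^ (2 * t) = g₁ v / 4` then give the estimate.
-/

noncomputable def geomPath (a b t : ℝ) : ℝ := a ^ (1 - t) * b ^ t

section geomPath

variable {a b c d t : ℝ}

theorem geomPath_zero (a b : ℝ) : geomPath a b 0 = a := by simp [geomPath]

theorem geomPath_one (a b : ℝ) : geomPath a b 1 = b := by simp [geomPath]

theorem geomPath_half (ha : 0 ≤ a) (hb : 0 ≤ b) : geomPath a b (1 / 2) = √(a * b) := by
  rw [geomPath, sqrt_eq_rpow, mul_rpow ha hb]
  norm_num

theorem geomPath_nonneg (ha : 0 ≤ a) (hb : 0 ≤ b) (t : ℝ) : 0 ≤ geomPath a b t := by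
  unfold geomPath; positivity

theorem geomPath_pos (ha : 0 < a) (hb : 0 < b) (t : ℝ) : 0 < geomPath a b t := by
  unfold geomPath; positivity

theorem geomPath_one_sub (a b t : ℝ) : geomPath a b (1 - t) = geomPath b a t := by
  rw [geomPath, geomPath, sub_sub_cancel, mul_comm]

theorem geomPath_self (ha : 0 < a) (t : ℝ) : geomPath a a t = a := by
  rw [geomPath, ← rpow_add ha, sub_add_cancel, rpow_one]

theorem geomPath_mul (ha : 0 ≤ a) (hb : 0 ≤ b) (hc : 0 ≤ c) (hd : 0 ≤ d) (t : ℝ) :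
    geomPath (a * c) (b * d) t = geomPath a b t * geomPath c d t := by
  simp only [geomPath, mul_rpow ha hc, mul_rpow hb hd]
  ring

theorem geomPath_eq_mul_rpow (ha : 0 < a) (hb : 0 ≤ b) (t : ℝ) :
    geomPath a b t = a * (b / a) ^ t := by
  rw [geomPath, div_rpow hb ha.le, rpow_sub ha, rpow_one]
  field_simp

theorem geomPath_le_add (ha : 0 ≤ a) (hb : 0 ≤ b) (ht : t ∈ Icc (0 : ℝ) 1) :
    geomPath a b t ≤ a + b := by
  unfold geomPath
  nlinarith [geom_mean_le_arith_mean2_weighted (w₁ := 1 - t) (w₂ := t) (by linarith [ht.2]) ht.1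
    ha hb (by ring), mul_nonneg ht.1 ha, mul_nonneg (sub_nonneg.2 ht.2) hb]

theorem hasDerivAt_geomPath (ha : 0 < a) (hb : 0 < b) (t : ℝ) :
    HasDerivAt (geomPath a b) ((log b - log a) * geomPath a b t) t := by
  have h := (((hasStrictDerivAt_const_rpow ha (1 - t)).hasDerivAt).comp t
    ((hasDerivAt_id t).const_sub 1)).mul (hasStrictDerivAt_const_rpow hb t).hasDerivAt
  refine h.congr_deriv ?_
  simp only [geomPath, Function.comp]
  ring

theorem strictMono_geomPath (ha : 0 < a) (hab : a < b) : StrictMono (geomPath a b) := by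
  intro t u htu
  simp only [geomPath_eq_mul_rpow ha (ha.trans hab).le]
  exact mul_lt_mul_of_pos_left (rpow_lt_rpow_of_exponent_lt ((one_lt_div ha).2 hab) htu) ha

theorem geomPath_mem_Icc (ha : 0 < a) (hab : a < b) (ht : t ∈ Icc (0 : ℝ) 1) :
    geomPath a b t ∈ Icc a b := by
  have hmono := (strictMono_geomPath ha hab).monotone
  exact ⟨(geomPath_zero a b).symm.trans_le (hmono ht.1), (hmono ht.2).trans_eq (geomPath_one a b)⟩

end geomPath

theorem integral_mul_rpow_two_mul {v : ℝ} (hv : 0 ≤ v) :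
    ∫ t in (0 : ℝ)..1 / 2, t * v ^ (2 * t) = g₁ v / 4 := by
  rcases hv.eq_or_lt with rfl | hv
  -- both sides vanish, the right one through the junk values `log 0 = 0` and `1 / 0 = 0`
  · have : ∀ t ∈ Ioc (0 : ℝ) (1 / 2), t * (0 : ℝ) ^ (2 * t) = 0 := fun t ht => by
      rw [zero_rpow (by linarith [ht.1]), mul_zero]
    rw [intervalIntegral.integral_of_le (by norm_num), setIntegral_congr_fun measurableSet_Ioc this]
    simp [g₁]
  rcases eq_or_ne v 1 with rfl | hv1
  · simp only [one_rpow, mul_one, integral_id, g₁]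
    norm_num
  obtain ⟨c, rfl⟩ : ∃ c, exp c = v := ⟨log v, exp_log hv⟩
  have hc : c ≠ 0 := by rintro rfl; simp at hv1
  have hexp : (fun t => t * exp c ^ (2 * t)) = fun t => t * exp (2 * c * t) := by
    funext t; rw [← exp_mul]; ring_nf
  have hderiv : ∀ t ∈ uIcc (0 : ℝ) (1 / 2),
      HasDerivAt (fun t => (t / (2 * c) - 1 / (4 * c ^ 2)) * exp (2 * c * t))
        (t * exp (2 * c * t)) t := by
    intro t _
    refine ((((hasDerivAt_id t).div_const (2 * c)).sub_const (1 / (4 * c ^ 2))).mul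
      (((hasDerivAt_id t).const_mul (2 * c)).exp)).congr_deriv ?_
    simp only [id]
    field_simp
    ring
  rw [hexp, intervalIntegral.integral_eq_sub_of_hasDerivAt hderiv
    (Continuous.intervalIntegrable (by fun_prop) _ _)]
  simp only [g₁, if_neg hv1, log_exp]
  field_simp
  simp only [mul_zero, exp_zero]
  ring

theorem integral_mul_geomPath_rpow {α β q : ℝ} (hα : 0 ≤ α) (hβ : 0 ≤ β) (hq : 0 < q) :
    ∫ t in (0 : ℝ)..1 / 2, t * geomPath α β t ^ q = α ^ q * (g₁ ((β / α) ^ (q / 2)) / 4) := by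
  rcases hα.eq_or_lt with rfl | hα
  · have : ∀ t ∈ uIcc (0 : ℝ) (1 / 2), t * geomPath 0 β t ^ q = 0 := fun t ht => by
      rw [uIcc_of_le (by norm_num)] at ht
      rw [geomPath, zero_rpow (by linarith [ht.2]), zero_mul, zero_rpow hq.ne', mul_zero]
    rw [intervalIntegral.integral_congr this, zero_rpow hq.ne']
    simp
  have hβα : 0 ≤ β / α := div_nonneg hβ hα.le
  have : ∀ t ∈ uIcc (0 : ℝ) (1 / 2),
      t * geomPath α β t ^ q = α ^ q * (t * ((β / α) ^ (q / 2)) ^ (2 * t)) := fun t _ => by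
    rw [geomPath_eq_mul_rpow hα hβ, mul_rpow hα.le (rpow_nonneg hβα _), ← rpow_mul hβα,
      ← rpow_mul hβα]
    ring_nf
  rw [intervalIntegral.integral_congr this, intervalIntegral.integral_const_mul,
    integral_mul_rpow_two_mul (rpow_nonneg hβα _)]

theorem memLp_ofReal_of_integrable_rpow {X : Type*} [MeasurableSpace X] {μ : Measure X}
    {g : X → ℝ} {r : ℝ} (hr : 0 < r) (hgm : AEStronglyMeasurable g μ) (hg : 0 ≤ᵐ[μ] g)
    (hgi : Integrable (fun x => g x ^ r) μ) : MemLp g (ENNReal.ofReal r) μ := by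
  refine (integrable_norm_rpow_iff hgm (by simpa using hr) ENNReal.ofReal_ne_top).1 ?_
  rw [ENNReal.toReal_ofReal hr.le]
  refine hgi.congr ?_
  filter_upwards [hg] with x hx
  rw [norm_of_nonneg hx]

theorem integral_mul_le_integral_rpow_mul_integral_mul_rpow {X : Type*} [MeasurableSpace X]
    {μ : Measure X} {w G : X → ℝ} {q : ℝ} (hq : 1 ≤ q) (hw : 0 ≤ᵐ[μ] w) (hG : 0 ≤ᵐ[μ] G)
    (hwi : Integrable w μ) (hGm : AEStronglyMeasurable G μ)
    (hwG : Integrable (fun x => w x * G x ^ q) μ) :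
    ∫ x, w x * G x ∂μ ≤ (∫ x, w x ∂μ) ^ (1 - 1 / q) * (∫ x, w x * G x ^ q ∂μ) ^ (1 / q) := by
  rcases hq.eq_or_lt with rfl | hq1
  · simp
  set p := q.conjExponent
  have hpq : p.HolderConjugate q := (HolderConjugate.conjExponent hq1).symm
  have hsum : 1 / p + 1 / q = 1 := by simpa only [one_div] using hpq.inv_add_inv_eq_one
  have hp_inv : 1 / p = 1 - 1 / q := by linarith
  -- Hölder for `w ^ (1/p)` and `w ^ (1/q) * G`
  have hfac : ∀ᵐ x ∂μ, (w x ^ (1 / p)) ^ p = w x ∧ (w x ^ (1 / q) * G x) ^ q = w x * G x ^ q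
      ∧ w x ^ (1 / p) * (w x ^ (1 / q) * G x) = w x * G x := by
    filter_upwards [hw, hG] with x hwx hGx
    refine ⟨?_, ?_, ?_⟩
    · rw [← rpow_mul hwx, one_div_mul_cancel hpq.ne_zero, rpow_one]
    · rw [mul_rpow (rpow_nonneg hwx _) hGx, ← rpow_mul hwx, one_div_mul_cancel hpq.symm.ne_zero,
        rpow_one]
    · rw [← mul_assoc, ← rpow_add' hwx (by rw [hsum]; norm_num), hsum, rpow_one]
  have hw' : 0 ≤ᵐ[μ] fun x => w x ^ (1 / p) := by
    filter_upwards [hw] with x hx using rpow_nonneg hx _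
  have hwG' : 0 ≤ᵐ[μ] fun x => w x ^ (1 / q) * G x := by
    filter_upwards [hw, hG] with x hx hGx using mul_nonneg (rpow_nonneg hx _) hGx
  have holder := integral_mul_le_Lp_mul_Lq_of_nonneg hpq hw' hwG'
    (memLp_ofReal_of_integrable_rpow hpq.pos
      (hwi.1.aemeasurable.pow_const _).aestronglyMeasurable hw'
      (hwi.congr (by filter_upwards [hfac] with x hx using hx.1.symm)))
    (memLp_ofReal_of_integrable_rpow hpq.symm.pos
      ((hwi.1.aemeasurable.pow_const _).mul hGm.aemeasurable).aestronglyMeasurable hwG'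
      (hwG.congr (by filter_upwards [hfac] with x hx using hx.2.1.symm)))
  have hleft : ∫ x, w x * G x ∂μ = ∫ x, w x ^ (1 / p) * (w x ^ (1 / q) * G x) ∂μ :=
    integral_congr_ae (by filter_upwards [hfac] with x hx using hx.2.2.symm)
  have hw_int : ∫ x, (w x ^ (1 / p)) ^ p ∂μ = ∫ x, w x ∂μ :=
    integral_congr_ae (by filter_upwards [hfac] with x hx using hx.1)
  have hwG_int : ∫ x, (w x ^ (1 / q) * G x) ^ q ∂μ = ∫ x, w x * G x ^ q ∂μ :=
    integral_congr_ae (by filter_upwards [hfac] with x hx using hx.2.1)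
  rwa [hleft, ← hp_inv, ← hw_int, ← hwG_int]

theorem integrableOn_mul_geomPath_rpow {α β q : ℝ} (hα : 0 ≤ α) (hβ : 0 ≤ β) (hq : 0 ≤ q) :
    IntegrableOn (fun t => t * geomPath α β t ^ q) (Ioc 0 (1 / 2)) := by
  refine Integrable.of_bound (by unfold geomPath; fun_prop) ((α + β) ^ q) ?_
  filter_upwards [ae_restrict_mem measurableSet_Ioc] with t ht
  have hgeom₀ := geomPath_nonneg hα hβ t
  rw [norm_of_nonneg (mul_nonneg ht.1.le (rpow_nonneg hgeom₀ _))]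
  calc t * geomPath α β t ^ q ≤ 1 * (α + β) ^ q :=
        mul_le_mul (by linarith [ht.2])
          (rpow_le_rpow hgeom₀ (geomPath_le_add hα hβ ⟨ht.1.le, by linarith [ht.2]⟩) hq)
          (by positivity) zero_le_one
    _ = (α + β) ^ q := one_mul _

theorem integral_mul_le_of_le_geomPath {G : ℝ → ℝ} {α β q : ℝ} (hq : 1 ≤ q) (hα : 0 ≤ α)
    (hβ : 0 ≤ β) (hG : IntervalIntegrable G volume 0 (1 / 2))
    (hG₀ : ∀ t ∈ Icc (0 : ℝ) (1 / 2), 0 ≤ G t)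
    (hGle : ∀ t ∈ Icc (0 : ℝ) (1 / 2), G t ≤ geomPath α β t) :
    ∫ t in (0 : ℝ)..1 / 2, t * G t ≤
      (1 / 2) ^ (3 - 1 / q) * (α * g₁ ((β / α) ^ (q / 2)) ^ (1 / q)) := by
  have hq₀ : 0 < q := by linarith
  set μ := volume.restrict (Ioc (0 : ℝ) (1 / 2))
  have hmem : ∀ᵐ t ∂μ, t ∈ Icc (0 : ℝ) (1 / 2) :=
    (ae_restrict_mem measurableSet_Ioc).mono fun t ht => Ioc_subset_Icc_self ht
  have hgeom := integrableOn_mul_geomPath_rpow hα hβ hq₀.le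
  have hle : ∀ᵐ t ∂μ, t * G t ^ q ≤ t * geomPath α β t ^ q := by
    filter_upwards [hmem] with t ht
    exact mul_le_mul_of_nonneg_left (rpow_le_rpow (hG₀ t ht) (hGle t ht) hq₀.le) ht.1
  have hGq : Integrable (fun t => t * G t ^ q) μ := by
    refine hgeom.mono' (aestronglyMeasurable_id.mul
      (hG.1.aemeasurable.pow_const q).aestronglyMeasurable) ?_
    filter_upwards [hmem, hle] with t ht hle
    rwa [norm_of_nonneg (mul_nonneg ht.1 (rpow_nonneg (hG₀ t ht) _))]
  have holder := integral_mul_le_integral_rpow_mul_integral_mul_rpow hq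
    (hmem.mono fun t ht => ht.1) (hmem.mono hG₀)
    (continuous_id.integrableOn_Icc.mono_set Ioc_subset_Icc_self) hG.1.1 hGq
  have hGq_int : ∫ t, t * G t ^ q ∂μ ≤ α ^ q * (g₁ ((β / α) ^ (q / 2)) / 4) := by
    rw [← integral_mul_geomPath_rpow hα hβ hq₀, intervalIntegral.integral_of_le (by norm_num)]
    exact integral_mono_ae hGq hgeom hle
  have hid : ∫ t, t ∂μ = (1 / 2) ^ (3 : ℝ) := by
    rw [← intervalIntegral.integral_of_le (by norm_num), integral_id]
    norm_num
  set g := g₁ ((β / α) ^ (q / 2))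
  have hg : 0 ≤ g := g₁_nonneg (rpow_nonneg (div_nonneg hβ hα) _)
  rw [intervalIntegral.integral_of_le (by norm_num)]
  calc ∫ t, t * G t ∂μ ≤ (∫ t, t ∂μ) ^ (1 - 1 / q) * (∫ t, t * G t ^ q ∂μ) ^ (1 / q) := holder
    _ ≤ ((1 / 2) ^ (3 : ℝ)) ^ (1 - 1 / q) * (α ^ q * (g / 4)) ^ (1 / q) := by
        rw [hid]
        gcongr
        exact integral_nonneg_of_ae
          (hmem.mono fun t ht => mul_nonneg ht.1 (rpow_nonneg (hG₀ t ht) _))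
    _ = (1 / 2) ^ (3 - 1 / q) * (α * g ^ (1 / q)) := by
        rw [show g / 4 = g * (1 / 2) ^ (2 : ℝ) by norm_num; ring,
          mul_rpow (rpow_nonneg hα _) (by positivity), mul_rpow hg (by positivity),
          ← rpow_mul hα, mul_one_div_cancel hq₀.ne', rpow_one, ← rpow_mul (by norm_num),
          ← rpow_mul (by norm_num), show (3 : ℝ) - 1 / q = 3 * (1 - 1 / q) + 2 * (1 / q) by ring,
          rpow_add (by norm_num)]
        ring

theorem sub_integral_eq_integral_mul_deriv {F F' : ℝ → ℝ}
    (hF : ∀ t ∈ Icc (0 : ℝ) 1, HasDerivAt F (F' t) t) (hF' : IntervalIntegrable F' volume 0 1) :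
    F (1 / 2) - ∫ t in (0 : ℝ)..1, F t =
      (∫ t in (0 : ℝ)..1 / 2, t * F' t) + ∫ t in (1 / 2 : ℝ)..1, (t - 1) * F' t := by
  have hsub₁ : uIcc (0 : ℝ) (1 / 2) ⊆ Icc 0 1 := by
    rw [uIcc_of_le (by norm_num)]; exact Icc_subset_Icc le_rfl (by norm_num)
  have hsub₂ : uIcc (1 / 2 : ℝ) 1 ⊆ Icc 0 1 := by
    rw [uIcc_of_le (by norm_num)]; exact Icc_subset_Icc (by norm_num) le_rfl
  have hFc : ContinuousOn F (Icc 0 1) := fun t ht => (hF t ht).continuousAt.continuousWithinAt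
  have ibp₁ := intervalIntegral.integral_mul_deriv_eq_deriv_mul
    (fun t _ => hasDerivAt_id t) (fun t ht => hF t (hsub₁ ht))
    intervalIntegrable_const (hF'.mono_set (by rwa [uIcc_of_le zero_le_one]))
  have ibp₂ := intervalIntegral.integral_mul_deriv_eq_deriv_mul
    (fun t _ => (hasDerivAt_id t).sub_const 1) (fun t ht => hF t (hsub₂ ht))
    intervalIntegrable_const (hF'.mono_set (by rwa [uIcc_of_le zero_le_one]))
  rw [← intervalIntegral.integral_add_adjacent_intervals
    ((hFc.mono hsub₁).intervalIntegrable) ((hFc.mono hsub₂).intervalIntegrable)]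
  simp only [id, one_mul] at ibp₁ ibp₂
  rw [ibp₁, ibp₂]
  ring

theorem abs_sub_integral_le {F F' : ℝ → ℝ}
    (hF : ∀ t ∈ Icc (0 : ℝ) 1, HasDerivAt F (F' t) t) (hF' : IntervalIntegrable F' volume 0 1) :
    |F (1 / 2) - ∫ t in (0 : ℝ)..1, F t| ≤
      (∫ t in (0 : ℝ)..1 / 2, t * |F' t|) + ∫ t in (0 : ℝ)..1 / 2, t * |F' (1 - t)| := by
  have hreflect :
      ∫ t in (1 / 2 : ℝ)..1, |(t - 1) * F' t| = ∫ t in (0 : ℝ)..1 / 2, t * |F' (1 - t)| := by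
    have := intervalIntegral.integral_comp_sub_left (fun t => |(t - 1) * F' t|) (1 : ℝ)
      (a := 0) (b := 1 / 2)
    rw [show (1 : ℝ) - 1 / 2 = 1 / 2 by norm_num, sub_zero] at this
    rw [← this]
    refine intervalIntegral.integral_congr fun t ht => ?_
    rw [uIcc_of_le (by norm_num)] at ht
    rw [abs_mul, show 1 - t - 1 = -t by ring, abs_neg, abs_of_nonneg ht.1]
  have hnonneg : ∫ t in (0 : ℝ)..1 / 2, |t * F' t| = ∫ t in (0 : ℝ)..1 / 2, t * |F' t| := by
    refine intervalIntegral.integral_congr fun t ht => ?_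
    rw [uIcc_of_le (by norm_num)] at ht
    rw [abs_mul, abs_of_nonneg ht.1]
  rw [sub_integral_eq_integral_mul_deriv hF hF', ← hreflect, ← hnonneg]
  exact (abs_add_le _ _).trans (add_le_add
    (intervalIntegral.abs_integral_le_integral_abs (by norm_num))
    (intervalIntegral.abs_integral_le_integral_abs (by norm_num)))

theorem abs_sub_integral_le_of_abs_deriv_le_geomPath {F F' : ℝ → ℝ} {α β q : ℝ} (hq : 1 ≤ q)
    (hα : 0 ≤ α) (hβ : 0 ≤ β) (hF : ∀ t ∈ Icc (0 : ℝ) 1, HasDerivAt F (F' t) t)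
    (hF' : IntervalIntegrable F' volume 0 1)
    (hF'le : ∀ t ∈ Icc (0 : ℝ) 1, |F' t| ≤ geomPath α β t) :
    |F (1 / 2) - ∫ t in (0 : ℝ)..1, F t| ≤ (1 / 2) ^ (3 - 1 / q) *
      (α * g₁ ((β / α) ^ (q / 2)) ^ (1 / q) + β * g₁ ((α / β) ^ (q / 2)) ^ (1 / q)) := by
  have hhalf : uIcc (0 : ℝ) (1 / 2) ⊆ uIcc 0 1 := by
    rw [uIcc_of_le (by norm_num), uIcc_of_le zero_le_one]
    exact Icc_subset_Icc le_rfl (by norm_num)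
  have hF'refl : IntervalIntegrable (fun t => F' (1 - t)) volume 0 1 := by
    simpa using (hF'.comp_sub_left 1).symm
  have hleft := integral_mul_le_of_le_geomPath hq hα hβ (hF'.abs.mono_set hhalf)
    (fun _ _ => abs_nonneg _) (fun t ht => hF'le t ⟨ht.1, ht.2.trans (by norm_num)⟩)
  have hright := integral_mul_le_of_le_geomPath hq hβ hα (hF'refl.abs.mono_set hhalf)
    (fun _ _ => abs_nonneg _) fun t ht => by
      simpa only [geomPath_one_sub] using
        hF'le (1 - t) ⟨by linarith [ht.2], by linarith [ht.1]⟩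
  calc _ ≤ _ := abs_sub_integral_le hF hF'
    _ ≤ _ := add_le_add hleft hright
    _ = _ := by ring

section changeOfVariables

variable {a b : ℝ}

theorem integral_div_eq_integral_comp_geomPath (ha : 0 < a) (hab : a < b) {f : ℝ → ℝ}
    (hf : ContinuousOn f (Icc a b)) :
    ∫ x in a..b, f x / x = (log b - log a) * ∫ t in (0 : ℝ)..1, f (geomPath a b t) := by
  have hb : 0 < b := ha.trans hab
  have himage : geomPath a b '' uIcc 0 1 ⊆ Icc a b := by
    rw [uIcc_of_le zero_le_one]
    rintro _ ⟨t, ht, rfl⟩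
    exact geomPath_mem_Icc ha hab ht
  have hcont : ContinuousOn (fun x => f x / x) (Icc a b) :=
    hf.div continuousOn_id fun x hx => (ha.trans_le hx.1).ne'
  have h := intervalIntegral.integral_deriv_smul_comp' (fun t _ => hasDerivAt_geomPath ha hb t)
    (continuous_const.mul (continuous_iff_continuousAt.2 fun t =>
      (hasDerivAt_geomPath ha hb t).continuousAt)).continuousOn (hcont.mono himage)
  rw [geomPath_zero, geomPath_one] at h
  rw [← h, ← intervalIntegral.integral_const_mul]
  refine intervalIntegral.integral_congr fun t _ => ?_
  simp only [smul_eq_mul, Function.comp]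
  field_simp [(geomPath_pos ha hb t).ne']

theorem intervalIntegrable_deriv_mul_comp_geomPath (ha : 0 < a) (hab : a < b) {g : ℝ → ℝ}
    (hg : IntervalIntegrable g volume a b) :
    IntervalIntegrable (fun t => (log b - log a) * geomPath a b t * g (geomPath a b t))
      volume 0 1 := by
  have hb : 0 < b := ha.trans hab
  rw [intervalIntegrable_iff_integrableOn_Icc_of_le zero_le_one]
  rw [intervalIntegrable_iff_integrableOn_Icc_of_le hab.le] at hg
  have h := (integrableOn_image_iff_integrableOn_abs_deriv_smul measurableSet_Icc
    (fun t _ => (hasDerivAt_geomPath ha hb t).hasDerivWithinAt)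
    (strictMono_geomPath ha hab).injective.injOn g).1
    (hg.mono_set (by rintro _ ⟨t, ht, rfl⟩; exact geomPath_mem_Icc ha hab ht))
  refine h.congr_fun (fun t _ => ?_) measurableSet_Icc
  simp only [smul_eq_mul]
  rw [abs_of_pos (mul_pos (sub_pos.2 (log_lt_log ha hab)) (geomPath_pos ha hb t))]

end changeOfVariables

theorem mul_le_rpow_of_le_one {s w : ℝ} (hs : s ≤ 1) (hw₀ : 0 ≤ w) (hw₁ : w ≤ 1) :
    s * w ≤ w ^ s :=
  (mul_le_of_le_one_left hw₀ hs).trans (self_le_rpow_of_le_one hw₀ hw₁ hs)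

theorem SGeometricallyConvexOn.abs_apply_geomPath_le {g : ℝ → ℝ} {a b q s t : ℝ} (hab : a ≤ b)
    (hq : 0 < q) (hs : s ∈ Ioc (0 : ℝ) 1)
    (hconv : SGeometricallyConvexOn s (Icc a b) (fun x => |g x| ^ q))
    (hga : |g a| ≤ 1) (hgb : |g b| ≤ 1) (ht : t ∈ Icc (0 : ℝ) 1) :
    |g (geomPath a b t)| ≤ geomPath (|g a| ^ s) (|g b| ^ s) t := by
  -- `s * w ≤ w ^ s`, and a base `μ ≤ 1` reverses the order of the exponents
  have hexp : ∀ {μ w : ℝ}, 0 ≤ μ → μ ≤ 1 → w ∈ Icc (0 : ℝ) 1 →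
      (μ ^ q) ^ (w ^ s) ≤ ((μ ^ s) ^ w) ^ q := fun {μ w} hμ₀ hμ₁ hw => by
    rw [← rpow_mul hμ₀, ← rpow_mul hμ₀, ← rpow_mul hμ₀]
    refine rpow_le_rpow_of_exponent_ge' hμ₀ hμ₁ (by positivity [hs.1.le, hw.1]) ?_
    nlinarith [mul_le_rpow_of_le_one hs.2 hw.1 hw.2]
  have hconv' := hconv a (left_mem_Icc.2 hab) b (right_mem_Icc.2 hab) (1 - t)
    ⟨by linarith [ht.2], by linarith [ht.1]⟩
  simp only [sub_sub_cancel] at hconv'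
  unfold geomPath
  rw [← rpow_le_rpow_iff (abs_nonneg _) (by positivity) hq,
    mul_rpow (by positivity) (by positivity)]
  exact hconv'.trans (mul_le_mul
    (hexp (abs_nonneg _) hga ⟨by linarith [ht.2], by linarith [ht.1]⟩)
    (hexp (abs_nonneg _) hgb ht) (by positivity) (by positivity))

theorem stmt_6_general
    (I : Set ℝ) (hI : I.OrdConnected) (hIpos : I ⊆ Set.Ioi (0:ℝ))
    (f f' : ℝ → ℝ)
    (a b : ℝ) (ha : a ∈ interior I) (hb : b ∈ interior I) (hab : a < b)
    (hdiff : ∀ x ∈ interior I, HasDerivAt f (f' x) x)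
    (hint : IntervalIntegrable f' volume a b)
    (q s : ℝ) (hq : 1 ≤ q) (hs : s ∈ Set.Ioc (0:ℝ) 1)
    (hconv : SGeometricallyConvexOn s (Set.Icc a b) (fun x => |f' x| ^ q))
    (hfa : |f' a| ≤ 1) (hfb : |f' b| ≤ 1) :
    |f (Real.sqrt (a * b)) - (1 / (Real.log b - Real.log a)) * ∫ x in a..b, f x / x| ≤
      Real.log (b / a) * (1 / 2 : ℝ) ^ (3 - 1 / q) *
        (a * |f' a| ^ s * (g₁ ((b * |f' b| ^ s / (a * |f' a| ^ s)) ^ (q / 2))) ^ (1 / q)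
         + b * |f' b| ^ s * (g₁ ((a * |f' a| ^ s / (b * |f' b| ^ s)) ^ (q / 2))) ^ (1 / q)) := by
  have hq₀ : 0 < q := by linarith
  have ha₀ : 0 < a := hIpos (interior_subset ha)
  have hb₀ : 0 < b := hIpos (interior_subset hb)
  set l := log b - log a with hl_def
  have hl : 0 < l := sub_pos.2 (log_lt_log ha₀ hab)
  have hsub : Icc a b ⊆ interior I := hI.interior.out ha hb
  set F' := fun t => l * geomPath a b t * f' (geomPath a b t)
  have hF : ∀ t ∈ Icc (0 : ℝ) 1, HasDerivAt (fun t => f (geomPath a b t)) (F' t) t :=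
    fun t ht => ((hdiff _ (hsub (geomPath_mem_Icc ha₀ hab ht))).comp t
      (hasDerivAt_geomPath ha₀ hb₀ t)).congr_deriv (by ring)
  have hF'le : ∀ t ∈ Icc (0 : ℝ) 1,
      |F' t| ≤ geomPath (l * (a * |f' a| ^ s)) (l * (b * |f' b| ^ s)) t := fun t ht => by
    rw [geomPath_mul hl.le hl.le (by positivity) (by positivity),
      geomPath_mul ha₀.le hb₀.le (by positivity) (by positivity), geomPath_self hl,
      abs_mul, abs_of_pos (mul_pos hl (geomPath_pos ha₀ hb₀ t)), ← mul_assoc]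
    exact mul_le_mul_of_nonneg_left (hconv.abs_apply_geomPath_le hab.le hq₀ hs hfa hfb ht)
      (mul_pos hl (geomPath_pos ha₀ hb₀ t)).le
  have hmean : f √(a * b) - 1 / l * ∫ x in a..b, f x / x =
      f (geomPath a b (1 / 2)) - ∫ t in (0 : ℝ)..1, f (geomPath a b t) := by
    rw [geomPath_half ha₀.le hb₀.le, integral_div_eq_integral_comp_geomPath ha₀ hab
      fun x hx => (hdiff x (hsub hx)).continuousAt.continuousWithinAt, ← hl_def]
    field_simp
  have h := abs_sub_integral_le_of_abs_deriv_le_geomPath hq (by positivity) (by positivity) hF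
    (intervalIntegrable_deriv_mul_comp_geomPath ha₀ hab hint) hF'le
  rw [mul_div_mul_left _ _ hl.ne', mul_div_mul_left _ _ hl.ne'] at h
  rw [hmean, log_div hb₀.ne' ha₀.ne']
  exact h.trans_eq (by ring)

theorem stmt_6
    (I : Set ℝ) (hI : I.OrdConnected) (hIpos : I ⊆ Set.Ioi (0:ℝ))
    (f f' : ℝ → ℝ) (hfpos : ∀ x ∈ I, 0 < f x)
    (a b : ℝ) (ha : a ∈ interior I) (hb : b ∈ interior I) (hab : a < b)
    (hdiff : ∀ x ∈ interior I, HasDerivAt f (f' x) x)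
    (hint : IntervalIntegrable f' volume a b)
    (q s : ℝ) (hq : 1 ≤ q) (hs : s ∈ Set.Ioc (0:ℝ) 1)
    (hconv : SGeometricallyConvexOn s (Set.Icc a b) (fun x => |f' x| ^ q))
    (hfa : |f' a| ≤ 1) (hfb : |f' b| ≤ 1) :
    |f (Real.sqrt (a * b)) - (1 / (Real.log b - Real.log a)) * ∫ x in a..b, f x / x| ≤
      Real.log (b / a) * (1 / 2 : ℝ) ^ (3 - 1 / q) *
        (a * |f' a| ^ s * (g₁ ((b * |f' b| ^ s / (a * |f' a| ^ s)) ^ (q / 2))) ^ (1 / q)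
         + b * |f' b| ^ s * (g₁ ((a * |f' a| ^ s / (b * |f' b| ^ s)) ^ (q / 2))) ^ (1 / q)) :=
  stmt_6_general I hI hIpos f f' a b ha hb hab hdiff hint q s hq hs hconv hfa hfb
end
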